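/- arXiv:2110.04190 — 2 statements merged into one kernel-verified Lean document; each statement's English description precedes it below -/
import Mathlib

section
/- Let G = ((A,B),E) with |A| = |B| = N be an (N,k,d)-expander with d > 0, let 0 < δ < 1, and let X ⊆ A with |X| ≥ δN. Identify A ≅ B ≅ [N] and define the iterated neighborhoods X⁰ := X and X^{i+1} := N(X^i) (taking the neighborhood with respect to E at each layer). Then for every i ≥ 0, |X^i| ≥ min{ (1−δ)N, (1+dδ)^i · δN }. -/
open scoped Classical

/-- Neighborhood `N(X) = { y ∈ B : ∃ x ∈ X, (x,y) ∈ E }` of `X ⊆ A`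
(both parts identified with `Fin N`, so neighborhoods can be iterated). -/
noncomputable def nbr {N : ℕ} (E : Finset (Fin N × Fin N)) (X : Finset (Fin N)) :
    Finset (Fin N) :=
  Finset.univ.filter (fun y => ∃ x ∈ X, (x, y) ∈ E)

/-- Reverse neighborhood `N(Y) = { x ∈ A : ∃ y ∈ Y, (x,y) ∈ E }` of `Y ⊆ B`. -/
noncomputable def nbrRev {N : ℕ} (E : Finset (Fin N × Fin N)) (Y : Finset (Fin N)) :
    Finset (Fin N) :=
  Finset.univ.filter (fun x => ∃ y ∈ Y, (x, y) ∈ E)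

/-- `(N,k,d)`-expander: `|E| ≤ kN` and every `X ⊆ A` (resp. `Y ⊆ B`) satisfies
`|N(X)| ≥ (1 + d(1 − |X|/N))|X|` (resp. symmetrically). -/
def IsNKDExpander (N k : ℕ) (d : ℝ) (E : Finset (Fin N × Fin N)) : Prop :=
  E.card ≤ k * N ∧
  (∀ X : Finset (Fin N),
    (1 + d * (1 - (X.card : ℝ) / N)) * X.card ≤ ((nbr E X).card : ℝ)) ∧
  (∀ Y : Finset (Fin N),
    (1 + d * (1 - (Y.card : ℝ) / N)) * Y.card ≤ ((nbrRev E Y).card : ℝ))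

/-- Let `G` be an `(N,k,d)`-expander with `d > 0`, let `0 < δ < 1`,
and let `X ⊆ A` with `|X| ≥ δN`.  Defining `X⁰ = X` and `X^{i+1} = N(X^i)`
(iterated neighborhoods), for every `i ≥ 0` we have
`|X^i| ≥ min{(1−δ)N, (1+dδ)^i δN}`. -/
theorem stmt6 {N k : ℕ} {d δ : ℝ} (hd : 0 < d) (hδ0 : 0 < δ) (hδ1 : δ < 1)
    {E : Finset (Fin N × Fin N)} (hG : IsNKDExpander N k d E)
    (X : Finset (Fin N)) (hX : δ * N ≤ (X.card : ℝ)) :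
    ∀ i : ℕ, min ((1 - δ) * N) ((1 + d * δ) ^ i * (δ * N)) ≤ (((nbr E)^[i] X).card : ℝ) := by
  have hcard : ∀ S : Finset (Fin N), (S.card : ℝ) ≤ N := by
    intro S
    exact_mod_cast (S.card_le_univ.trans (by simp))
  intro i
  induction i with
  | zero =>
    refine le_trans (min_le_right _ _) ?_
    simpa using hX
  | succ i ih =>
    set S := (nbr E)^[i] X with hSdef
    rw [Function.iterate_succ_apply']
    have hS : (S.card : ℝ) ≤ N := hcard S
    have hfac : 0 ≤ 1 - (S.card : ℝ) / N := by
      have : (S.card : ℝ) / N ≤ 1 := div_le_one_of_le₀ hS (Nat.cast_nonneg N)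
      linarith
    have hexp := hG.2.1 S
    have hsnn : (0:ℝ) ≤ S.card := Nat.cast_nonneg _
    have hmono : (S.card : ℝ) ≤ ((nbr E S).card : ℝ) := by
      nlinarith [mul_nonneg (mul_nonneg hd.le hfac) hsnn]
    by_cases h1 : (1 - δ) * N ≤ (S.card : ℝ)
    · exact le_trans (min_le_left _ _) (h1.trans hmono)
    · push_neg at h1
      have hN : (0:ℝ) < N := by nlinarith
      have hδle : δ ≤ 1 - (S.card : ℝ) / N := by
        have : (S.card : ℝ) / N ≤ 1 - δ := by
          rw [div_le_iff₀ hN]; linarith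
        linarith
      have hmin : (1 + d * δ) ^ i * (δ * N) ≤ (S.card : ℝ) := by
        rcases le_total ((1 - δ) * N) ((1 + d * δ) ^ i * (δ * N)) with h | h
        · exfalso; rw [min_eq_left h] at ih; linarith
        · rw [min_eq_right h] at ih; exact ih
      refine le_trans (min_le_right _ _) ?_
      have hpos : (0:ℝ) ≤ 1 + d * δ := by nlinarith
      have h2 : (1 + d * δ) ^ (i + 1) * (δ * N) = (1 + d * δ) * ((1 + d * δ) ^ i * (δ * N)) := by
        ring
      have h3 : (1 + d * δ) * ((1 + d * δ) ^ i * (δ * N)) ≤ (1 + d * δ) * (S.card : ℝ) :=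
        mul_le_mul_of_nonneg_left hmin hpos
      have h4 : (1 + d * δ) * (S.card : ℝ) ≤ (1 + d * (1 - (S.card : ℝ) / N)) * S.card :=
        mul_le_mul_of_nonneg_right (by nlinarith) hsnn
      linarith
end

section
/- Let G = ([N], E) be a directed acyclic graph on vertex set [N] = {1,…,N} all of whose edges (u,v) satisfy u < v, and suppose G is a δ-local expander with δ < min(γ/2, 1/4) for some 0 < γ < 1. Let S ⊆ [N] and let x < y be two nodes of [N] that are both γ-good with respect to S. Then there is a directed path in G from x to y all of whose vertices (including x and y) lie outside S. -/
/-! Let `F` be the set of vertices reachable from `x` in `G − S`, and `B` the set of vertices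
from which `y` is reachable in `G − S`. By induction on `ρ`, at most `δρ` vertices of
`(x, x + ρ] \ S` lie outside `F`: split the window into two halves; goodness of `x` and the
induction hypothesis make the reached part of the lower half `δ`-dense, so the unreached part of
the upper half must be sparse, or the expander property would give an edge from `F` leaving `F`
inside `G − S`. Symmetrically at most `δρ` vertices of `(y − ρ, y] \ S` lie outside `B`; there
the seed `y` belongs to the window, and for odd `ρ` the bound comes from two pairs of halves and
a parity count. Since `(x, y] \ S` has at least `γ(y − x) > 2δ(y − x)` elements, one of them lies
in `F ∩ B`. -/

open scoped Classical

/-- A DAG on `[N] = {1,…,N}` (edge relation `E`, all edges `(u,v)` with `u < v`) is a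
`δ`-local expander if for every `v ≥ 1`, `r ≥ 1` with `v + 2r − 1 ≤ N` and every
`X ⊆ {v,…,v+r−1}`, `Y ⊆ {v+r,…,v+2r−1}` with `|X| ≥ δr` and `|Y| ≥ δr`, there is an
edge from `X` to `Y`. -/
def IsLocalExpander (N : ℕ) (E : ℕ → ℕ → Prop) (δ : ℝ) : Prop :=
  ∀ v r : ℕ, 1 ≤ v → 1 ≤ r → v + 2 * r - 1 ≤ N →
    ∀ X Y : Finset ℕ, X ⊆ Finset.Icc v (v + r - 1) →
      Y ⊆ Finset.Icc (v + r) (v + 2 * r - 1) →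
      δ * r ≤ (X.card : ℝ) → δ * r ≤ (Y.card : ℝ) →
      ∃ x ∈ X, ∃ y ∈ Y, E x y

/-- A node `x ∈ [N]` is `γ`-good with respect to `S ⊆ [N]` if for every `r ≥ 1` with
`x − r + 1 ≥ 1` we have `|I_r(x) \ S| ≥ γ|I_r(x)|` where `I_r(x) = {x−r+1,…,x}`, and
for every `r ≥ 1` with `x + r ≤ N` we have `|I*_r(x) \ S| ≥ γ|I*_r(x)|` where
`I*_r(x) = {x+1,…,x+r}`. -/
def IsGood (N : ℕ) (γ : ℝ) (S : Finset ℕ) (x : ℕ) : Prop :=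
  (∀ r : ℕ, 1 ≤ r → r ≤ x →
    γ * ((Finset.Icc (x - r + 1) x).card : ℝ) ≤ (((Finset.Icc (x - r + 1) x) \ S).card : ℝ)) ∧
  (∀ r : ℕ, 1 ≤ r → x + r ≤ N →
    γ * ((Finset.Icc (x + 1) (x + r)).card : ℝ) ≤ (((Finset.Icc (x + 1) (x + r)) \ S).card : ℝ))

open Finset Relation

def EdgeOutside (E : ℕ → ℕ → Prop) (S : Finset ℕ) (u v : ℕ) : Prop :=
  E u v ∧ u ∉ S ∧ v ∉ S

noncomputable def window (P : ℕ → Prop) (S : Finset ℕ) (a b : ℕ) : Finset ℕ :=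
  {w ∈ Ioc a b \ S | P w}

section window

variable {P : ℕ → Prop} {S : Finset ℕ} {a b c : ℕ}

theorem mem_window {w : ℕ} : w ∈ window P S a b ↔ w ∈ Ioc a b ∧ w ∉ S ∧ P w := by
  simp [window, and_assoc]

theorem window_subset_Icc {v w : ℕ} (hv : v ≤ a + 1) (hw : b ≤ w) :
    window P S a b ⊆ Icc v w := by
  intro u hu
  rw [mem_window, mem_Ioc] at hu
  rw [mem_Icc]
  omega

theorem card_window_le : (window P S a b).card ≤ b - a :=
  (card_filter_le _ _).trans ((card_le_card sdiff_subset).trans (Nat.card_Ioc a b).le)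

theorem card_window_add_card_window_not :
    (window P S a b).card + (window (¬ P ·) S a b).card = (Ioc a b \ S).card := by
  simp only [window]
  convert card_filter_add_card_filter_not (s := Ioc a b \ S) P

theorem card_window_add (hab : a ≤ b) (hbc : b ≤ c) :
    (window P S a b).card + (window P S b c).card = (window P S a c).card := by
  rw [← card_union_of_disjoint]
  · simp only [window, ← filter_union, ← union_sdiff_distrib, Ioc_union_Ioc_eq_Ioc hab hbc]
  · exact disjoint_filter_filter ((Ioc_disjoint_Ioc_of_le le_rfl).mono sdiff_subset sdiff_subset)

theorem le_card_window_of_card_window_not_le {γ δ : ℝ} {k : ℕ} (hγδ : 2 * δ ≤ γ)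
    (hT : γ * k ≤ (Ioc a b \ S).card) (hnot : ((window (¬ P ·) S a b).card : ℝ) ≤ δ * k) :
    δ * k ≤ (window P S a b).card := by
  have hsum : ((window P S a b).card : ℝ) + (window (¬ P ·) S a b).card =
      (Ioc a b \ S).card := by
    exact_mod_cast card_window_add_card_window_not
  nlinarith [k.cast_nonneg (α := ℝ)]

theorem exists_and_of_card_window_not_add_lt {Q : ℕ → Prop}
    (h : (window (¬ P ·) S a b).card + (window (¬ Q ·) S a b).card < (Ioc a b \ S).card) :
    ∃ w, P w ∧ Q w := by
  by_contra! hPQ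
  have hcover : Ioc a b \ S ⊆ window (¬ P ·) S a b ∪ window (¬ Q ·) S a b := by
    intro w hw
    obtain ⟨hwI, hwS⟩ := mem_sdiff.1 hw
    by_cases hP : P w
    · exact mem_union_right _ (mem_window.2 ⟨hwI, hwS, hPQ w hP⟩)
    · exact mem_union_left _ (mem_window.2 ⟨hwI, hwS, hP⟩)
  exact ((card_le_card hcover).trans (card_union_le _ _)).not_gt h

end window

theorem natCast_add_le_two_mul_sub {p c a b : ℕ} {t δ : ℝ} (hδ1 : δ ≤ 1)
    (hpc : p + c ≤ a + b + 1) (hp : p ≤ t) (hc : c ≤ t) (ha : a ≤ t - δ) (hb : b ≤ t - δ) :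
    (p + c : ℝ) ≤ 2 * t - δ := by
  obtain ⟨j, hj | hj⟩ := Nat.even_or_odd' (p + c)
  · have hjt : (j : ℝ) ≤ t - δ := by
      rcases (by omega : j ≤ a ∨ j ≤ b) with h | h
      · exact (Nat.cast_le.2 h).trans ha
      · exact (Nat.cast_le.2 h).trans hb
    have hpcj : (p + c : ℝ) = 2 * j := by exact_mod_cast hj
    linarith
  · have hjt : ((j + 1 : ℕ) : ℝ) ≤ t := by
      rcases (by omega : j + 1 ≤ p ∨ j + 1 ≤ c) with h | h
      · exact (Nat.cast_le.2 h).trans hp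
      · exact (Nat.cast_le.2 h).trans hc
    have hpcj : (p + c : ℝ) = 2 * j + 1 := by exact_mod_cast hj
    push_cast at hjt
    linarith

namespace IsLocalExpander

variable {N : ℕ} {E : ℕ → ℕ → Prop} {δ : ℝ}

theorem pos (hLE : IsLocalExpander N E δ) (hN : 2 ≤ N) : 0 < δ := by
  by_contra! hδ
  obtain ⟨u, hu, -⟩ := hLE 1 1 le_rfl le_rfl (by omega) ∅ ∅ (empty_subset _) (empty_subset _)
    (by simpa using hδ) (by simpa using hδ)
  exact notMem_empty u hu

variable {X Y : Finset ℕ} {v r : ℕ}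

theorem card_right_lt (hLE : IsLocalExpander N E δ) (hv : 1 ≤ v) (hr : 1 ≤ r)
    (hN : v + 2 * r - 1 ≤ N) (hX : X ⊆ Icc v (v + r - 1))
    (hY : Y ⊆ Icc (v + r) (v + 2 * r - 1)) (hXc : δ * r ≤ X.card)
    (hXY : ∀ u ∈ X, ∀ w ∈ Y, ¬ E u w) : (Y.card : ℝ) < δ * r := by
  by_contra! hYc
  obtain ⟨u, hu, w, hw, huw⟩ := hLE v r hv hr hN X Y hX hY hXc hYc
  exact hXY u hu w hw huw

theorem card_left_lt (hLE : IsLocalExpander N E δ) (hv : 1 ≤ v) (hr : 1 ≤ r)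
    (hN : v + 2 * r - 1 ≤ N) (hX : X ⊆ Icc v (v + r - 1))
    (hY : Y ⊆ Icc (v + r) (v + 2 * r - 1)) (hYc : δ * r ≤ Y.card)
    (hXY : ∀ u ∈ X, ∀ w ∈ Y, ¬ E u w) : (X.card : ℝ) < δ * r := by
  by_contra! hXc
  obtain ⟨u, hu, w, hw, huw⟩ := hLE v r hv hr hN X Y hX hY hXc hYc
  exact hXY u hu w hw huw

end IsLocalExpander

section closed

variable {N : ℕ} {E : ℕ → ℕ → Prop} {S : Finset ℕ} {R : ℕ → Prop} {γ δ : ℝ}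

theorem not_edge_of_forward_closed (hR : ∀ u w, R u → EdgeOutside E S u w → R w)
    {u w a b : ℕ} (hu : R u) (huS : u ∉ S) (hw : w ∈ window (¬ R ·) S a b) : ¬ E u w := by
  obtain ⟨-, hwS, hwR⟩ := mem_window.1 hw
  exact fun huw => hwR (hR u w hu ⟨huw, huS, hwS⟩)

theorem not_edge_of_backward_closed (hR : ∀ u w, EdgeOutside E S u w → R w → R u)
    {u w a b c d : ℕ} (hu : u ∈ window (¬ R ·) S a b) (hw : w ∈ window R S c d) : ¬ E u w := by
  obtain ⟨-, huS, huR⟩ := mem_window.1 hu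
  obtain ⟨-, hwS, hwR⟩ := mem_window.1 hw
  exact fun huw => huR (hR u w ⟨huw, huS, hwS⟩ hwR)

theorem IsLocalExpander.card_window_not_le_of_forward_closed (hLE : IsLocalExpander N E δ)
    (hδ1 : δ ≤ 1) (hγδ : 2 * δ ≤ γ) (hR : ∀ u w, R u → EdgeOutside E S u w → R w)
    {x : ℕ} (hx1 : 1 ≤ x) (hxS : x ∉ S) (hxR : R x)
    (hT : ∀ r, x + r ≤ N → γ * r ≤ (Ioc x (x + r) \ S).card) (ρ : ℕ) (hρ : x + ρ ≤ N) :
    ((window (¬ R ·) S x (x + ρ)).card : ℝ) ≤ δ * ρ := by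
  induction ρ using Nat.strong_induction_on with
  | _ ρ ih =>
  obtain ⟨m, rfl | rfl⟩ := Nat.even_or_odd' ρ
  · rcases Nat.eq_zero_or_pos m with rfl | hm
    · simp [window]
    have hlow := ih m (by omega) (by omega)
    have hhit := le_card_window_of_card_window_not_le hγδ (hT m (by omega)) hlow
    have hup := hLE.card_right_lt (Y := window (¬ R ·) S (x + m) (x + 2 * m)) (v := x + 1)
      (r := m) (by omega) hm (by omega) (window_subset_Icc le_rfl (by omega))
      (window_subset_Icc (by omega) (by omega)) hhit fun u hu w hw =>
        not_edge_of_forward_closed hR (mem_window.1 hu).2.2 (mem_window.1 hu).2.1 hw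
    rw [← card_window_add (by omega : x ≤ x + m) (by omega : x + m ≤ x + 2 * m)]
    push_cast at hup ⊢
    linarith
  have hlow := ih m (by omega) (by omega)
  have hhit := le_card_window_of_card_window_not_le hγδ (hT m (by omega)) hlow
  -- the seed `x` pads the reached part of `(x, x + m]` to a subset of a window of length `m + 1`
  have hXc : δ * (m + 1 : ℕ) ≤ (insert x (window R S x (x + m))).card := by
    rw [card_insert_of_notMem fun h => by simpa using (mem_Ioc.1 (mem_window.1 h).1).1]
    push_cast
    linarith
  have hup := hLE.card_right_lt (Y := window (¬ R ·) S (x + m) (x + (2 * m + 1))) (v := x)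
    (r := m + 1) hx1 (by omega) (by omega)
    (insert_subset (by simp) (window_subset_Icc (by omega) (by omega)))
    (window_subset_Icc (by omega) (by omega)) hXc fun u hu w hw => by
      rcases mem_insert.1 hu with rfl | hu
      · exact not_edge_of_forward_closed hR hxR hxS hw
      · exact not_edge_of_forward_closed hR (mem_window.1 hu).2.2 (mem_window.1 hu).2.1 hw
  rw [← card_window_add (by omega : x ≤ x + m) (by omega : x + m ≤ x + (2 * m + 1))]
  push_cast at hup ⊢
  linarith

theorem IsLocalExpander.card_window_not_le_of_backward_closed (hLE : IsLocalExpander N E δ)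
    (hδ0 : 0 ≤ δ) (hδ1 : δ ≤ 1) (hγδ : 2 * δ ≤ γ) (hR : ∀ u w, EdgeOutside E S u w → R w → R u)
    {y : ℕ} (hyN : y ≤ N) (hyR : R y)
    (hT : ∀ a ρ, a + ρ = y → γ * ρ ≤ (Ioc a y \ S).card) (ρ : ℕ) {a : ℕ} (ha : 1 ≤ a)
    (hay : a + ρ = y) : ((window (¬ R ·) S a y).card : ℝ) ≤ δ * ρ := by
  induction ρ using Nat.strong_induction_on generalizing a with
  | _ ρ ih =>
  have hhit : ∀ k < ρ, ∀ b, b + k = y → δ * k ≤ (window R S b y).card := fun k hk b hb =>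
    le_card_window_of_card_window_not_le hγδ (hT b k hb) (ih k hk (by omega) hb)
  obtain ⟨m, rfl | rfl⟩ := Nat.even_or_odd' ρ
  · rcases Nat.eq_zero_or_pos m with rfl | hm
    · simp [window, ← hay]
    have hlow := hLE.card_left_lt (X := window (¬ R ·) S a (a + m)) (v := a + 1) (r := m)
      (by omega) hm (by omega) (window_subset_Icc le_rfl (by omega))
      (window_subset_Icc (by omega) (by omega)) (hhit m (by omega) (a + m) (by omega))
      fun u hu w hw => not_edge_of_backward_closed hR hu hw
    have hup := ih m (by omega) (by omega : 1 ≤ a + m) (by omega)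
    rw [← card_window_add (by omega : a ≤ a + m) (by omega : a + m ≤ y)]
    push_cast at hlow ⊢
    linarith
  rcases Nat.eq_zero_or_pos m with rfl | hm
  · have hempty : window (¬ R ·) S a y = ∅ := eq_empty_of_forall_notMem fun w hw => by
      obtain ⟨hw, -, hwR⟩ := mem_window.1 hw
      rw [mem_Ioc] at hw
      exact hwR (by rwa [show w = y by omega])
    simp [hempty, hδ0]
  /- Here the seed `y` cannot pad the lower half, so `(a, y]` is split twice, as
  `(a, a + m] ∪ (a + m, y]` and as `(a, a + 1] ∪ (a + 1, a + m + 1] ∪ (a + m + 1, y]`. -/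
  have hlowA := hLE.card_left_lt (X := window (¬ R ·) S a (a + m)) (v := a) (r := m + 1)
    ha (by omega) (by omega) (window_subset_Icc (by omega) (by omega))
    (window_subset_Icc (by omega) (by omega)) (hhit (m + 1) (by omega) (a + m) (by omega))
    fun u hu w hw => not_edge_of_backward_closed hR hu hw
  have hupA := ih (m + 1) (by omega) (by omega : 1 ≤ a + m) (by omega)
  have hlowB := hLE.card_left_lt (X := window (¬ R ·) S (a + 1) (a + m + 1)) (v := a + 2)
    (r := m) (by omega) hm (by omega) (window_subset_Icc le_rfl (by omega))
    (window_subset_Icc (by omega) (by omega)) (hhit m (by omega) (a + m + 1) (by omega))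
    fun u hu w hw => not_edge_of_backward_closed hR hu hw
  have hupB := ih m (by omega) (by omega : 1 ≤ a + m + 1) (by omega)
  have hfirst : (window (¬ R ·) S a (a + 1)).card ≤ 1 := card_window_le.trans (by omega)
  have hsplitA := card_window_add (P := (¬ R ·)) (S := S) (by omega : a ≤ a + m)
    (by omega : a + m ≤ y)
  have hsplitB := card_window_add (P := (¬ R ·)) (S := S) (by omega : a ≤ a + 1)
    (by omega : a + 1 ≤ y)
  have hsplitB' := card_window_add (P := (¬ R ·)) (S := S) (by omega : a + 1 ≤ a + m + 1)
    (by omega : a + m + 1 ≤ y)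
  push_cast at hlowA hupA ⊢
  have hcount := natCast_add_le_two_mul_sub
    (a := (window (¬ R ·) S (a + 1) (a + m + 1)).card)
    (b := (window (¬ R ·) S (a + m + 1) y).card) hδ1 (by omega) hlowA.le hupA
    (by linarith) (by linarith)
  rw [← hsplitA]
  push_cast
  linarith

end closed

namespace IsGood

variable {N : ℕ} {γ : ℝ} {S : Finset ℕ}

theorem le_card_Ioc_add {x r : ℕ} (h : IsGood N γ S x) (hr : x + r ≤ N) :
    γ * r ≤ (Ioc x (x + r) \ S).card := by
  rcases Nat.eq_zero_or_pos r with rfl | hr1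
  · simp
  have hgood := h.2 r hr1 hr
  rwa [Icc_add_one_left_eq_Ioc, Nat.card_Ioc, Nat.add_sub_cancel_left] at hgood

theorem le_card_Ioc_of_add_eq {a ρ y : ℕ} (h : IsGood N γ S y) (hay : a + ρ = y) :
    γ * ρ ≤ (Ioc a y \ S).card := by
  rcases Nat.eq_zero_or_pos ρ with rfl | hρ
  · simp
  have hgood := h.1 ρ hρ (by omega)
  rwa [show y - ρ + 1 = a + 1 by omega, Icc_add_one_left_eq_Ioc, Nat.card_Ioc,
    show y - a = ρ by omega] at hgood

theorem notMem {x : ℕ} (h : IsGood N γ S x) (hγ : 0 < γ) (hx : 1 ≤ x) : x ∉ S := by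
  intro hxS
  have hsingle := h.le_card_Ioc_of_add_eq (a := x - 1) (ρ := 1) (by omega)
  rw [show Ioc (x - 1) x = {x} by ext; simp; omega,
    sdiff_eq_empty_iff_subset.2 (singleton_subset_iff.2 hxS)] at hsingle
  simp at hsingle
  linarith

end IsGood

theorem exists_isChain_of_reflTransGen_edgeOutside {E : ℕ → ℕ → Prop} {S : Finset ℕ}
    {x y : ℕ} (hxS : x ∉ S) (h : ReflTransGen (EdgeOutside E S) x y) :
    ∃ l : List ℕ, List.IsChain E (x :: l) ∧ (x :: l).getLast (List.cons_ne_nil x l) = y ∧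
      ∀ v ∈ x :: l, v ∉ S := by
  obtain ⟨l, hl, hlast⟩ := List.exists_isChain_cons_of_relationReflTransGen h
  exact ⟨l, hl.imp fun _ _ huv => huv.1, hlast,
    hl.induction (· ∉ S) _ (fun _ _ huv _ => huv.2.2) fun _ => hxS⟩

theorem stmt10_general (N : ℕ) (E : ℕ → ℕ → Prop)
    (γ δ : ℝ) (hγ0 : 0 < γ) (hδ : δ < min (γ / 2) (1 / 4))
    (hLE : IsLocalExpander N E δ)
    (S : Finset ℕ)
    (x y : ℕ) (hx : x ∈ Finset.Icc 1 N) (hy : y ∈ Finset.Icc 1 N) (hxy : x < y)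
    (hgx : IsGood N γ S x) (hgy : IsGood N γ S y) :
    ∃ l : List ℕ, List.Chain E x l ∧
      (x :: l).getLast (List.cons_ne_nil x l) = y ∧
      ∀ v ∈ x :: l, v ∉ S := by
  rw [Finset.mem_Icc] at hx hy
  obtain ⟨hδγ, hδ1⟩ := lt_min_iff.1 hδ
  have hδ0 := hLE.pos (by omega)
  have hxS := hgx.notMem hγ0 hx.1
  obtain ⟨d, rfl⟩ : ∃ d, y = x + d := ⟨y - x, by omega⟩
  set F := ReflTransGen (EdgeOutside E S) x
  set B := (ReflTransGen (EdgeOutside E S) · (x + d))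
  have hF := hLE.card_window_not_le_of_forward_closed (R := F) (by linarith) (by linarith)
    (fun _ _ hu huw => hu.tail huw) hx.1 hxS ReflTransGen.refl
    (fun _ hr => hgx.le_card_Ioc_add hr) d hy.2
  have hB := hLE.card_window_not_le_of_backward_closed (R := B) hδ0.le (by linarith)
    (by linarith) (fun _ _ huw hw => hw.head huw) hy.2 ReflTransGen.refl
    (fun _ _ h => hgy.le_card_Ioc_of_add_eq h) d hx.1 rfl
  have hT := hgx.le_card_Ioc_add hy.2
  have hgap : 0 < (γ - 2 * δ) * d := mul_pos (by linarith) (by exact_mod_cast (by omega : 0 < d))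
  obtain ⟨w, hxw, hwy⟩ := exists_and_of_card_window_not_add_lt (P := F) (Q := B)
    (by exact_mod_cast (by linarith : ((window (¬ F ·) S x (x + d)).card : ℝ)
      + (window (¬ B ·) S x (x + d)).card < (Ioc x (x + d) \ S).card))
  exact exists_isChain_of_reflTransGen_edgeOutside hxS (hxw.trans hwy)

/-- Let `G = ([N],E)` be a DAG (all edges `(u,v)` satisfy `u < v`,
with endpoints in `[N]`) that is a `δ`-local expander where `δ < min(γ/2, 1/4)` and
`0 < γ < 1`. If `x < y` are both `γ`-good with respect to `S ⊆ [N]`, then there is a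
directed path in `G` from `x` to `y` all of whose vertices (including `x` and `y`)
lie outside `S`. -/
theorem stmt10 (N : ℕ) (E : ℕ → ℕ → Prop)
    (hE : ∀ u v, E u v → 1 ≤ u ∧ u < v ∧ v ≤ N)
    (γ δ : ℝ) (hγ0 : 0 < γ) (hγ1 : γ < 1) (hδ : δ < min (γ / 2) (1 / 4))
    (hLE : IsLocalExpander N E δ)
    (S : Finset ℕ) (hS : S ⊆ Finset.Icc 1 N)
    (x y : ℕ) (hx : x ∈ Finset.Icc 1 N) (hy : y ∈ Finset.Icc 1 N) (hxy : x < y)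
    (hgx : IsGood N γ S x) (hgy : IsGood N γ S y) :
    ∃ l : List ℕ, List.Chain E x l ∧
      (x :: l).getLast (List.cons_ne_nil x l) = y ∧
      ∀ v ∈ x :: l, v ∉ S :=
  stmt10_general N E γ δ hγ0 hδ hLE S x y hx hy hxy hgx hgy
end
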